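/- For any adaptive policy π of length k on an arbitrary influence graph under the independent cascade model with full-adoption feedback, σ(π) ≤ k·OPT_N(G,1) ≤ k·OPT_N(G,k). In particular, the k-adaptivity gap of any class of influence graphs is at most k. -/

import Mathlib

/-!
Run the policy on a live-edge graph `L` and let `R` be the set of nodes activated after `t`
steps. Under full-adoption feedback the policy's choices so far, and `R` itself, depend only
on the edges of `L` leaving `R`; the edges leaving the other nodes are still fresh. So the
nodes newly activated by the next seed `v` are reached from `v` through an independent copy
of the unexplored part of the graph, and the expected gain of the step is at most
`σ({v}) ≤ OPT_N(G,1)`. Summing the `k` gains gives `σ(π) ≤ k · OPT_N(G,1)`, and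
`OPT_N(G,1) ≤ OPT_N(G,k)` by monotonicity of `σ`. Formally, the fresh copy is obtained by
exchanging the unexplored edges of `L` with those of an independent graph `K`.
-/

open Finset

/-- Probability of a live-edge graph `L`: each potential directed edge `e` is
included independently with probability `p e`. -/
noncomputable def liveProb {V : Type*} [Fintype V] [DecidableEq V]
    (p : V × V → ℝ) (L : Finset (V × V)) : ℝ :=
  (∏ e ∈ L, p e) * ∏ e ∈ Lᶜ, (1 - p e)

/-- Nodes reached from the seed set `S` in the live-edge graph `L`. -/
noncomputable def reachSet {V : Type*} [Fintype V] [DecidableEq V]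
    (L : Finset (V × V)) (S : Finset V) : Finset V := by
  classical
  exact Finset.univ.filter fun v =>
    ∃ u ∈ S, Relation.ReflTransGen (fun a b => (a, b) ∈ L) u v

/-- The seed set selected by the adaptive policy `π` after `t` steps on the
live-edge graph `L`, under full-adoption feedback: at each step the policy sees
the current seeds and the realisation restricted to them. -/
noncomputable def runPolicy {V : Type*} [Fintype V] [DecidableEq V]
    (π : Finset V → (V → Finset V) → V) (L : Finset (V × V)) : ℕ → Finset V
  | 0 => ∅
  | t + 1 =>
      let S := runPolicy π L t
      insert (π S fun v => if v ∈ S then reachSet L {v} else ∅) S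

/-- Expected influence spread of an adaptive policy `π` run for `k` steps. -/
noncomputable def adaptiveSpread {V : Type*} [Fintype V] [DecidableEq V]
    (p : V × V → ℝ) (π : Finset V → (V → Finset V) → V) (k : ℕ) : ℝ :=
  ∑ L : Finset (V × V), liveProb p L * ((reachSet L (runPolicy π L k)).card : ℝ)

/-- Expected influence spread of a fixed (non-adaptive) seed set `S`. -/
noncomputable def spread {V : Type*} [Fintype V] [DecidableEq V]
    (p : V × V → ℝ) (S : Finset V) : ℝ :=
  ∑ L : Finset (V × V), liveProb p L * ((reachSet L S).card : ℝ)

section InfluenceMaximization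

variable {V : Type*} [DecidableEq V]

def splice (A : Finset V) (L K : Finset (V × V)) : Finset (V × V) :=
  L.filter (fun e => e.1 ∈ A) ∪ K.filter (fun e => e.1 ∉ A)

lemma mem_splice {A : Finset V} {L K : Finset (V × V)} {e : V × V} :
    e ∈ splice A L K ↔ if e.1 ∈ A then e ∈ L else e ∈ K := by
  by_cases h : e.1 ∈ A <;> simp [splice, h]

lemma splice_splice_splice (A : Finset V) (L K : Finset (V × V)) :
    splice A (splice A L K) (splice A K L) = L := by
  ext e; by_cases h : e.1 ∈ A <;> simp [mem_splice, h]

lemma filter_splice (A : Finset V) (L K : Finset (V × V)) :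
    (splice A L K).filter (fun e => e.1 ∉ A) = K.filter (fun e => e.1 ∉ A) := by
  ext e; by_cases h : e.1 ∈ A <;> simp [mem_splice, h]

variable [Fintype V]

lemma mem_reachSet {L : Finset (V × V)} {S : Finset V} {w : V} :
    w ∈ reachSet L S ↔ ∃ u ∈ S, Relation.ReflTransGen (fun a b => (a, b) ∈ L) u w := by
  simp [reachSet]

lemma subset_reachSet (L : Finset (V × V)) (S : Finset V) : S ⊆ reachSet L S :=
  fun v hv => mem_reachSet.2 ⟨v, hv, .refl⟩

lemma reachSet_closed {L : Finset (V × V)} {S : Finset V} {e : V × V}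
    (he : e ∈ L) (h : e.1 ∈ reachSet L S) : e.2 ∈ reachSet L S := by
  obtain ⟨u, hu, hpath⟩ := mem_reachSet.1 h
  exact mem_reachSet.2 ⟨u, hu, hpath.tail he⟩

lemma reachSet_subset_of_closed {L : Finset (V × V)} {S A : Finset V} (hS : S ⊆ A)
    (hA : ∀ e ∈ L, e.1 ∈ A → e.2 ∈ A) : reachSet L S ⊆ A := by
  intro w hw
  obtain ⟨u, hu, hpath⟩ := mem_reachSet.1 hw
  clear hw
  induction hpath with
  | refl => exact hS hu
  | tail _ hbc ih => exact hA _ hbc ih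

lemma reachSet_mono_left {L M : Finset (V × V)} (h : L ⊆ M) (S : Finset V) :
    reachSet L S ⊆ reachSet M S :=
  reachSet_subset_of_closed (subset_reachSet M S) fun _ he => reachSet_closed (h he)

lemma reachSet_mono_right (L : Finset (V × V)) {S T : Finset V} (h : S ⊆ T) :
    reachSet L S ⊆ reachSet L T :=
  reachSet_subset_of_closed (h.trans (subset_reachSet L T)) fun _ => reachSet_closed

@[simp]
lemma reachSet_empty (L : Finset (V × V)) : reachSet L (∅ : Finset V) = ∅ := by
  ext w; simp [mem_reachSet]

lemma reachSet_congr {L M : Finset (V × V)} {S : Finset V}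
    (h : ∀ e : V × V, e.1 ∈ reachSet L S → (e ∈ M ↔ e ∈ L)) :
    reachSet M S = reachSet L S := by
  have hML : reachSet M S ⊆ reachSet L S :=
    reachSet_subset_of_closed (subset_reachSet L S) fun e he he₁ =>
      reachSet_closed ((h e he₁).1 he) he₁
  refine hML.antisymm (reachSet_subset_of_closed (subset_reachSet M S) fun e he he₁ => ?_)
  exact reachSet_closed ((h e (hML he₁)).2 he) he₁

lemma reachSet_insert_subset (L : Finset (V × V)) (S : Finset V) (v : V) :
    reachSet L (insert v S) ⊆
      reachSet (L.filter fun e => e.1 ∉ reachSet L S) {v} ∪ reachSet L S := by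
  refine reachSet_subset_of_closed ?_ fun e he he₁ => ?_
  · exact insert_subset (mem_union_left _ (subset_reachSet _ _ (by simp)))
      ((subset_reachSet L S).trans subset_union_right)
  · by_cases hS : e.1 ∈ reachSet L S
    · exact mem_union_right _ (reachSet_closed he hS)
    · have hv : e.1 ∈ reachSet (L.filter fun e => e.1 ∉ reachSet L S) {v} := by
        simpa [hS] using he₁
      exact mem_union_left _ (reachSet_closed (mem_filter.2 ⟨he, hS⟩) hv)

lemma card_reachSet_insert_sub_le (L : Finset (V × V)) (S : Finset V) (v : V) :
    ((reachSet L (insert v S)).card : ℝ) - (reachSet L S).card ≤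
      (reachSet (L.filter fun e => e.1 ∉ reachSet L S) {v}).card := by
  have hcard := (card_le_card (reachSet_insert_subset L S v)).trans (card_union_le _ _)
  have : ((reachSet L (insert v S)).card : ℝ) ≤
      (reachSet (L.filter fun e => e.1 ∉ reachSet L S) {v}).card + (reachSet L S).card := by
    exact_mod_cast hcard
  linarith

lemma liveProb_eq_prod (p : V × V → ℝ) (L : Finset (V × V)) :
    liveProb p L = ∏ e, if e ∈ L then p e else 1 - p e := by
  rw [prod_ite, liveProb]
  congr 1 <;> apply prod_congr _ fun _ _ => rfl <;> ext e <;> simp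

lemma liveProb_nonneg {p : V × V → ℝ} (hp : ∀ e, 0 ≤ p e ∧ p e ≤ 1)
    (L : Finset (V × V)) : 0 ≤ liveProb p L := by
  rw [liveProb_eq_prod]
  refine prod_nonneg fun e _ => ?_
  split_ifs
  exacts [(hp e).1, sub_nonneg.2 (hp e).2]

lemma sum_liveProb (p : V × V → ℝ) : ∑ L : Finset (V × V), liveProb p L = 1 := by
  have h := prod_add (fun e : V × V => p e) (fun e => 1 - p e) univ
  simp only [add_sub_cancel, prod_const_one, powerset_univ] at h
  rw [h]
  exact sum_congr rfl fun L _ => by rw [liveProb, compl_eq_univ_sdiff]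

lemma sum_liveProb_mul (p : V × V → ℝ) (c : ℝ) :
    ∑ L : Finset (V × V), liveProb p L * c = c := by
  rw [← sum_mul, sum_liveProb, one_mul]

lemma spread_mono {p : V × V → ℝ} (hp : ∀ e, 0 ≤ p e ∧ p e ≤ 1)
    {S T : Finset V} (h : S ⊆ T) : spread p S ≤ spread p T := by
  refine sum_le_sum fun L _ => mul_le_mul_of_nonneg_left ?_ (liveProb_nonneg hp L)
  exact_mod_cast card_le_card (reachSet_mono_right L h)

lemma liveProb_splice_mul (p : V × V → ℝ) (A : Finset V) (L K : Finset (V × V)) :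
    liveProb p (splice A L K) * liveProb p (splice A K L) = liveProb p L * liveProb p K := by
  simp only [liveProb_eq_prod, ← prod_mul_distrib, mem_splice]
  refine prod_congr rfl fun e _ => ?_
  split_ifs <;> ring

/-- Since `R` only sees the edges leaving `R L`, splicing at `R L` is an involution of pairs
of live-edge graphs, and it preserves their product measure. -/
lemma sum_liveProb_mul_splice (p : V × V → ℝ) (R : Finset (V × V) → Finset V)
    (hR : ∀ L K, R (splice (R L) L K) = R L) (f : Finset (V × V) → Finset (V × V) → ℝ) :
    ∑ L, ∑ K, liveProb p L * liveProb p K * f (splice (R L) L K) (splice (R L) K L) =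
      ∑ L, ∑ K, liveProb p L * liveProb p K * f L K := by
  let Φ : Finset (V × V) × Finset (V × V) → Finset (V × V) × Finset (V × V) :=
    fun x => (splice (R x.1) x.1 x.2, splice (R x.1) x.2 x.1)
  have hΦ : Function.Involutive Φ := fun x => by
    simp only [Φ, hR, splice_splice_splice]
  let F : Finset (V × V) × Finset (V × V) → ℝ :=
    fun x => liveProb p x.1 * liveProb p x.2 * f x.1 x.2
  have hF : ∀ x, F (Φ x) = liveProb p x.1 * liveProb p x.2 * f (Φ x).1 (Φ x).2 := fun x => by
    simp only [F, Φ, liveProb_splice_mul]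
  simp only [← Fintype.sum_prod_type']
  rw [← hΦ.bijective.sum_comp F]
  exact sum_congr rfl fun x _ => (hF x).symm

variable (π : Finset V → (V → Finset V) → V)

/-- The information the policy sees about the seeds `S`: the nodes each of them reaches. -/
noncomputable def feedback (L : Finset (V × V)) (S : Finset V) : V → Finset V :=
  fun v => if v ∈ S then reachSet L {v} else ∅

noncomputable def seedAt (L : Finset (V × V)) (t : ℕ) : V :=
  π (runPolicy π L t) (feedback L (runPolicy π L t))

lemma runPolicy_succ (L : Finset (V × V)) (t : ℕ) :
    runPolicy π L (t + 1) = insert (seedAt π L t) (runPolicy π L t) := rfl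

lemma runPolicy_mono (L : Finset (V × V)) : Monotone (runPolicy π L) :=
  monotone_nat_of_le_succ fun t => by
    rw [runPolicy_succ]
    exact subset_insert _ _

lemma feedback_congr {L M : Finset (V × V)} {S : Finset V}
    (h : ∀ e : V × V, e.1 ∈ reachSet L S → (e ∈ M ↔ e ∈ L)) : feedback M S = feedback L S := by
  funext v
  by_cases hv : v ∈ S
  · simp only [feedback, hv, if_true]
    exact reachSet_congr fun e he =>
      h e (reachSet_mono_right L (singleton_subset_iff.2 hv) he)
  · simp [feedback, hv]

lemma runPolicy_congr {L M : Finset (V × V)} {t : ℕ}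
    (h : ∀ e : V × V, e.1 ∈ reachSet L (runPolicy π L t) → (e ∈ M ↔ e ∈ L)) :
    runPolicy π M t = runPolicy π L t := by
  induction t with
  | zero => rfl
  | succ t ih =>
    have h' : ∀ e : V × V, e.1 ∈ reachSet L (runPolicy π L t) → (e ∈ M ↔ e ∈ L) :=
      fun e he => h e (reachSet_mono_right L (runPolicy_mono π L t.le_succ) he)
    rw [runPolicy_succ, runPolicy_succ, seedAt, seedAt, ih h', feedback_congr h']

lemma seedAt_congr {L M : Finset (V × V)} {t : ℕ}
    (h : ∀ e : V × V, e.1 ∈ reachSet L (runPolicy π L t) → (e ∈ M ↔ e ∈ L)) :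
    seedAt π M t = seedAt π L t := by
  rw [seedAt, seedAt, runPolicy_congr π h, feedback_congr h]

section Splice

variable (t : ℕ) (L K : Finset (V × V))

lemma splice_agree :
    ∀ e : V × V, e.1 ∈ reachSet L (runPolicy π L t) →
      (e ∈ splice (reachSet L (runPolicy π L t)) L K ↔ e ∈ L) :=
  fun e he => by simp [mem_splice, he]

lemma reachSet_runPolicy_splice :
    reachSet (splice (reachSet L (runPolicy π L t)) L K)
        (runPolicy π (splice (reachSet L (runPolicy π L t)) L K) t) =
      reachSet L (runPolicy π L t) := by
  rw [runPolicy_congr π (splice_agree π t L K), reachSet_congr (splice_agree π t L K)]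

lemma seedAt_splice :
    seedAt π (splice (reachSet L (runPolicy π L t)) L K) t = seedAt π L t :=
  seedAt_congr π (splice_agree π t L K)

end Splice

lemma expected_gain_le {p : V × V → ℝ} (hp : ∀ e, 0 ≤ p e ∧ p e ≤ 1) {OPT1 : ℝ}
    (hOPT1 : ∀ v : V, spread p {v} ≤ OPT1) (t : ℕ) :
    ∑ L, liveProb p L * (((reachSet L (runPolicy π L (t + 1))).card : ℝ) -
      (reachSet L (runPolicy π L t)).card) ≤ OPT1 := by
  let gain : Finset (V × V) → Finset (V × V) → ℝ := fun L K =>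
    (reachSet (K.filter fun e => e.1 ∉ reachSet L (runPolicy π L t)) {seedAt π L t}).card
  have hw : ∀ L K, 0 ≤ liveProb p L * liveProb p K := fun L K =>
    mul_nonneg (liveProb_nonneg hp L) (liveProb_nonneg hp K)
  -- a fresh independent copy `K` supplies the edges not yet explored by the policy
  have hresample : ∑ L, liveProb p L * gain L L =
      ∑ L, ∑ K, liveProb p L * liveProb p K * gain L K := by
    have hindep : ∑ L, liveProb p L * gain L L =
        ∑ L, ∑ K, liveProb p L * liveProb p K * gain L L := by
      simp only [mul_assoc, ← mul_sum, sum_liveProb_mul]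
    rw [hindep, ← sum_liveProb_mul_splice p (fun L => reachSet L (runPolicy π L t))
      (reachSet_runPolicy_splice π t) fun L _ => gain L L]
    refine sum_congr rfl fun L _ => sum_congr rfl fun K _ => ?_
    simp only [gain, reachSet_runPolicy_splice, seedAt_splice, filter_splice]
  calc ∑ L, liveProb p L * (((reachSet L (runPolicy π L (t + 1))).card : ℝ) -
          (reachSet L (runPolicy π L t)).card)
      ≤ ∑ L, liveProb p L * gain L L := by
        refine sum_le_sum fun L _ => mul_le_mul_of_nonneg_left ?_ (liveProb_nonneg hp L)
        rw [runPolicy_succ]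
        exact card_reachSet_insert_sub_le L _ _
    _ = ∑ L, ∑ K, liveProb p L * liveProb p K * gain L K := hresample
    _ ≤ ∑ L, ∑ K, liveProb p L * liveProb p K * (reachSet K {seedAt π L t}).card := by
        refine sum_le_sum fun L _ => sum_le_sum fun K _ =>
          mul_le_mul_of_nonneg_left ?_ (hw L K)
        simp only [gain]
        exact_mod_cast card_le_card (reachSet_mono_left (filter_subset _ _) _)
    _ = ∑ L, liveProb p L * spread p {seedAt π L t} := by
        simp only [spread, mul_sum, mul_assoc]
    _ ≤ ∑ L, liveProb p L * OPT1 :=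
        sum_le_sum fun L _ => mul_le_mul_of_nonneg_left (hOPT1 _) (liveProb_nonneg hp L)
    _ = OPT1 := sum_liveProb_mul p OPT1

lemma adaptiveSpread_eq_sum_gain (p : V × V → ℝ) (k : ℕ) :
    adaptiveSpread p π k = ∑ t ∈ range k, ∑ L, liveProb p L *
      (((reachSet L (runPolicy π L (t + 1))).card : ℝ) - (reachSet L (runPolicy π L t)).card) := by
  rw [sum_comm, adaptiveSpread]
  refine sum_congr rfl fun L _ => ?_
  rw [← mul_sum, sum_range_sub (fun t => ((reachSet L (runPolicy π L t)).card : ℝ))]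
  simp [runPolicy]

lemma adaptiveSpread_le {p : V × V → ℝ} (hp : ∀ e, 0 ≤ p e ∧ p e ≤ 1) {OPT1 : ℝ}
    (hOPT1 : ∀ v : V, spread p {v} ≤ OPT1) (k : ℕ) :
    adaptiveSpread p π k ≤ k * OPT1 := by
  rw [adaptiveSpread_eq_sum_gain]
  calc _ ≤ ∑ _t ∈ range k, OPT1 :=
        sum_le_sum fun t _ => expected_gain_le π hp hOPT1 t
    _ = k * OPT1 := by simp

end InfluenceMaximization

/-- Theorem `lemk`: any adaptive policy of length `k` has expected spread at
most `k · OPT_N(G,1) ≤ k · OPT_N(G,k)`; hence the `k`-adaptivity gap is at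
most `k`. -/
theorem stmt_12 {V : Type*} [Fintype V] [DecidableEq V]
    (p : V × V → ℝ) (hp : ∀ e, 0 ≤ p e ∧ p e ≤ 1)
    (π : Finset V → (V → Finset V) → V) (k : ℕ) (hk : 1 ≤ k)
    (hkn : k ≤ Fintype.card V)
    (OPT1 OPTk : ℝ)
    (hOPT1 : IsGreatest {x : ℝ | ∃ S : Finset V, S.card = 1 ∧ spread p S = x} OPT1)
    (hOPTk : IsGreatest {x : ℝ | ∃ S : Finset V, S.card = k ∧ spread p S = x} OPTk) :
    adaptiveSpread p π k ≤ (k : ℝ) * OPT1 ∧ (k : ℝ) * OPT1 ≤ (k : ℝ) * OPTk := by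
  refine ⟨adaptiveSpread_le π hp (fun v => hOPT1.2 ⟨{v}, card_singleton v, rfl⟩) k,
    mul_le_mul_of_nonneg_left ?_ k.cast_nonneg⟩
  obtain ⟨S₁, hS₁, rfl⟩ := hOPT1.1
  obtain ⟨S, hS₁S, -, hS⟩ := exists_subsuperset_card_eq (subset_univ S₁)
    (hS₁ ▸ hk) (by rwa [card_univ])
  exact (spread_mono hp hS₁S).trans (hOPTk.2 ⟨S, hS, rfl⟩)
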